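/- For every vector X in R^6, ψ⁻ ∧ (X ⌟ ψ⁺) = (JX)^♭ ∧ ω² and ψ⁻ ∧ (X ⌟ ψ⁻) = X^♭ ∧ ω², for the standard SU(3) structure on R^6. -/
import Mathlib


/-- `V = ℝ⁶`. We identify vectors and covectors via the standard metric, so that
exterior forms are represented as elements of the exterior algebra of `V`. -/
abbrev V : Type := Fin 6 → ℝ

/-- the standard basis `e₁,…,e₆` (0-indexed) -/
def ee (i : Fin 6) : V := Pi.single i 1

/-- the standard complex structure `J(e_{2i-1}) = e_{2i}` -/
def Jf (X : V) : V := ![-X 1, X 0, -X 3, X 2, -X 5, X 4]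

/-- the basis one-forms `e^i` (identified with `e_i` via the metric) -/
noncomputable def e (i : Fin 6) : ExteriorAlgebra ℝ V := ExteriorAlgebra.ι ℝ (ee i)

/-- the fundamental two-form `ω = e^{12} + e^{34} + e^{56}` -/
noncomputable def ω : ExteriorAlgebra ℝ V := e 0 * e 1 + e 2 * e 3 + e 4 * e 5

/-- `ψ⁺ = e^{135} - e^{146} - e^{236} - e^{245}` -/
noncomputable def ψp : ExteriorAlgebra ℝ V :=
  e 0 * e 2 * e 4 - e 0 * e 3 * e 5 - e 1 * e 2 * e 5 - e 1 * e 3 * e 4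

/-- `ψ⁻ = e^{136} + e^{145} + e^{235} - e^{246}` -/
noncomputable def ψm : ExteriorAlgebra ℝ V :=
  e 0 * e 2 * e 5 + e 0 * e 3 * e 4 + e 1 * e 2 * e 4 - e 1 * e 3 * e 5

/-- the metric dual (flat) of a vector -/
noncomputable def flat (x : V) : Module.Dual ℝ V := ∑ i, x i • LinearMap.proj i

/-- interior product (contraction) of a vector with a form -/
noncomputable def icontr (x : V) : ExteriorAlgebra ℝ V →ₗ[ℝ] ExteriorAlgebra ℝ V :=
  CliffordAlgebra.contractLeft (flat x)

/-- `Λ = ½ Σᵢ Jeᵢ ⌟ eᵢ ⌟`, the metric adjoint of wedging with `ω` -/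
noncomputable def lam (u : ExteriorAlgebra ℝ V) : ExteriorAlgebra ℝ V :=
  (1/2 : ℝ) • ∑ i : Fin 6, icontr (Jf (ee i)) (icontr (ee i) u)

lemma flat_ee (X : V) (i : Fin 6) : flat X (ee i) = X i := by
  simp [flat, ee, Pi.single_apply]

lemma eswap (i j : Fin 6) : e i * e j = -(e j * e i) :=
  eq_neg_of_add_eq_zero_left (ExteriorAlgebra.ι_add_mul_swap _ _)

lemma eswap' (i j : Fin 6) (z : ExteriorAlgebra ℝ V) :
    e i * (e j * z) = -(e j * (e i * z)) := by
  rw [← mul_assoc, eswap, neg_mul, mul_assoc]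

lemma esq (i : Fin 6) : e i * e i = 0 := ExteriorAlgebra.ι_sq_zero _

lemma esq' (i : Fin 6) (z : ExteriorAlgebra ℝ V) : e i * (e i * z) = 0 := by
  rw [← mul_assoc, esq, zero_mul]

lemma sw10 : e 1 * e 0 = -(e 0 * e 1) := eswap 1 0
lemma sw10' (z : ExteriorAlgebra ℝ V) : e 1 * (e 0 * z) = -(e 0 * (e 1 * z)) := eswap' 1 0 z
lemma sw20 : e 2 * e 0 = -(e 0 * e 2) := eswap 2 0
lemma sw20' (z : ExteriorAlgebra ℝ V) : e 2 * (e 0 * z) = -(e 0 * (e 2 * z)) := eswap' 2 0 z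
lemma sw21 : e 2 * e 1 = -(e 1 * e 2) := eswap 2 1
lemma sw21' (z : ExteriorAlgebra ℝ V) : e 2 * (e 1 * z) = -(e 1 * (e 2 * z)) := eswap' 2 1 z
lemma sw30 : e 3 * e 0 = -(e 0 * e 3) := eswap 3 0
lemma sw30' (z : ExteriorAlgebra ℝ V) : e 3 * (e 0 * z) = -(e 0 * (e 3 * z)) := eswap' 3 0 z
lemma sw31 : e 3 * e 1 = -(e 1 * e 3) := eswap 3 1
lemma sw31' (z : ExteriorAlgebra ℝ V) : e 3 * (e 1 * z) = -(e 1 * (e 3 * z)) := eswap' 3 1 z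
lemma sw32 : e 3 * e 2 = -(e 2 * e 3) := eswap 3 2
lemma sw32' (z : ExteriorAlgebra ℝ V) : e 3 * (e 2 * z) = -(e 2 * (e 3 * z)) := eswap' 3 2 z
lemma sw40 : e 4 * e 0 = -(e 0 * e 4) := eswap 4 0
lemma sw40' (z : ExteriorAlgebra ℝ V) : e 4 * (e 0 * z) = -(e 0 * (e 4 * z)) := eswap' 4 0 z
lemma sw41 : e 4 * e 1 = -(e 1 * e 4) := eswap 4 1
lemma sw41' (z : ExteriorAlgebra ℝ V) : e 4 * (e 1 * z) = -(e 1 * (e 4 * z)) := eswap' 4 1 z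
lemma sw42 : e 4 * e 2 = -(e 2 * e 4) := eswap 4 2
lemma sw42' (z : ExteriorAlgebra ℝ V) : e 4 * (e 2 * z) = -(e 2 * (e 4 * z)) := eswap' 4 2 z
lemma sw43 : e 4 * e 3 = -(e 3 * e 4) := eswap 4 3
lemma sw43' (z : ExteriorAlgebra ℝ V) : e 4 * (e 3 * z) = -(e 3 * (e 4 * z)) := eswap' 4 3 z
lemma sw50 : e 5 * e 0 = -(e 0 * e 5) := eswap 5 0
lemma sw50' (z : ExteriorAlgebra ℝ V) : e 5 * (e 0 * z) = -(e 0 * (e 5 * z)) := eswap' 5 0 z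
lemma sw51 : e 5 * e 1 = -(e 1 * e 5) := eswap 5 1
lemma sw51' (z : ExteriorAlgebra ℝ V) : e 5 * (e 1 * z) = -(e 1 * (e 5 * z)) := eswap' 5 1 z
lemma sw52 : e 5 * e 2 = -(e 2 * e 5) := eswap 5 2
lemma sw52' (z : ExteriorAlgebra ℝ V) : e 5 * (e 2 * z) = -(e 2 * (e 5 * z)) := eswap' 5 2 z
lemma sw53 : e 5 * e 3 = -(e 3 * e 5) := eswap 5 3
lemma sw53' (z : ExteriorAlgebra ℝ V) : e 5 * (e 3 * z) = -(e 3 * (e 5 * z)) := eswap' 5 3 z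
lemma sw54 : e 5 * e 4 = -(e 4 * e 5) := eswap 5 4
lemma sw54' (z : ExteriorAlgebra ℝ V) : e 5 * (e 4 * z) = -(e 4 * (e 5 * z)) := eswap' 5 4 z

lemma X_eq (X : V) :
    X = X 0 • ee 0 + X 1 • ee 1 + X 2 • ee 2 + X 3 • ee 3 + X 4 • ee 4 + X 5 • ee 5 := by
  funext i; fin_cases i <;> simp [ee, Pi.single_apply]

lemma iota_eq (X : V) : ExteriorAlgebra.ι ℝ X
    = X 0 • e 0 + X 1 • e 1 + X 2 • e 2 + X 3 • e 3 + X 4 • e 4 + X 5 • e 5 := by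
  conv_lhs => rw [X_eq X]
  simp [e, map_add, map_smul]

lemma contr3 (X : V) (i j k : Fin 6) :
    CliffordAlgebra.contractLeft (flat X) (e i * (e j * e k))
      = X i • (e j * e k) - X j • (e i * e k) + X k • (e i * e j) := by
  simp only [e, CliffordAlgebra.contractLeft_ι_mul, CliffordAlgebra.contractLeft_ι, flat_ee,
    Algebra.algebraMap_eq_smul_one, mul_sub, mul_smul_comm, mul_one, smul_sub]
  abel

theorem stmt5 (X : V) :
    ψm * icontr X ψp = ExteriorAlgebra.ι ℝ (Jf X) * (ω * ω) ∧
    ψm * icontr X ψm = ExteriorAlgebra.ι ℝ X * (ω * ω) := by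
  refine ⟨?_, ?_⟩ <;>
  · simp only [ψm, ψp, ω, icontr, iota_eq, show Jf X 0 = -X 1 from rfl, show Jf X 1 = X 0 from rfl, show Jf X 2 = -X 3 from rfl, show Jf X 3 = X 2 from rfl, show Jf X 4 = -X 5 from rfl, show Jf X 5 = X 4 from rfl]
    simp only [mul_assoc, map_add, map_sub, map_neg, map_smul,
      contr3,
      mul_zero, zero_mul, smul_zero, zero_smul, add_zero, zero_add, sub_zero, zero_sub, neg_zero,
      mul_add, add_mul, mul_sub, sub_mul, mul_neg, neg_mul, mul_one,
      mul_smul_comm, smul_mul_assoc, smul_smul, smul_neg, neg_neg, smul_add, smul_sub,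
      esq, esq', sw10, sw10', sw20, sw20', sw21, sw21', sw30, sw30', sw31, sw31', sw32, sw32', sw40, sw40', sw41, sw41', sw42, sw42', sw43, sw43', sw50, sw50', sw51, sw51', sw52, sw52', sw53, sw53', sw54, sw54']
    module
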